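/- Let K = ℚ(√D) with D ≥ 2 squarefree and discriminant Δ. If α = eα_{i,r} + fα_{i,r+1} with i ≥ -1 odd, 0 ≤ r ≤ u_{i+2}-1, e ≥ 1, f ≥ 0, then Nm(α) < √Δ·((u_{i+2}-r+2)e + (u_{i+2}-r+1)f)·((u_{i+2}-r+1)e + (u_{i+2}-r)f). -/

import Mathlib

noncomputable section

/-- `ω_D`: the standard generator of the ring of integers of `ℚ(√D)`. -/
def omegaD (D : ℕ) : ℝ := if D % 4 = 1 then (1 + Real.sqrt D) / 2 else Real.sqrt D

/-- The Galois conjugate of `ω_D`. -/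
def omegaD' (D : ℕ) : ℝ := if D % 4 = 1 then (1 - Real.sqrt D) / 2 else -Real.sqrt D

/-- Elements of `O_K` in coordinates: `(x, y)` represents `x + y·ω_D`. -/
abbrev OK : Type := ℤ × ℤ

/-- First real embedding. -/
def emb1 (D : ℕ) (a : OK) : ℝ := a.1 + a.2 * omegaD D

/-- Second real embedding (Galois conjugate). -/
def emb2 (D : ℕ) (a : OK) : ℝ := a.1 + a.2 * omegaD' D

/-- Galois conjugation on `O_K`. -/
def conjOK (D : ℕ) (a : OK) : OK := (a.1 + (if D % 4 = 1 then (1 : ℤ) else 0) * a.2, -a.2)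

/-- Total positivity. -/
def TotPos (D : ℕ) (a : OK) : Prop := 0 < emb1 D a ∧ 0 < emb2 D a

/-- The field norm. -/
def Nm (D : ℕ) (a : OK) : ℝ := emb1 D a * emb2 D a

/-- Indecomposability: totally positive and not a sum of two totally positive elements. -/
def Indec (D : ℕ) (a : OK) : Prop :=
  TotPos D a ∧ ¬ ∃ b c : OK, TotPos D b ∧ TotPos D c ∧ a = b + c

/-- Number of partitions of `α` into indecomposable parts (`p_K(α|I)`). -/
def pKI (D : ℕ) (α : OK) : ℕ :=
  Set.ncard {s : Multiset OK | (∀ x ∈ s, Indec D x) ∧ s.sum = α}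

/-- Number of partitions of `α` into totally positive parts (`p_K(α)`). -/
def pK (D : ℕ) (α : OK) : ℕ :=
  Set.ncard {s : Multiset OK | (∀ x ∈ s, TotPos D x) ∧ s.sum = α}

/-- Discriminant of `ℚ(√D)`. -/
def disc (D : ℕ) : ℕ := if D % 4 = 1 then D else 4 * D

/-- The ordered two-sided sequence of indecomposables together with
the coefficients `v j ≥ 2` from the Hejda–Kala relation `v_j β_j = β_{j-1} + β_{j+1}`. -/
structure BetaSeq (D : ℕ) (β : ℤ → OK) (v : ℤ → ℤ) : Prop where
  indec : ∀ j, Indec D (β j)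
  surj : ∀ a : OK, Indec D a → ∃ j, β j = a
  mono : StrictMono fun j => emb1 D (β j)
  zero : β 0 = (1, 0)
  conj_eq : ∀ j, β (-j) = conjOK D (β j)
  v_two_le : ∀ j, 2 ≤ v j
  v_symm : ∀ j, v (-j) = v j
  rel : ∀ j, v j • β j = β (j - 1) + β (j + 1)

/-- The continued fraction data of `ω_D = [⌈u₀/2⌉, \overline{u₁, …, u_s}]` (with `u_s = u_0`),
with tails `γ_0 = ω_D`, `γ_i = [u_i, u_{i+1}, …]` for `i ≥ 1`. -/
structure CFData (D : ℕ) (u : ℕ → ℕ) (γ : ℕ → ℝ) : Prop where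
  gamma_zero : γ 0 = omegaD D
  u_zero : (u 0 : ℤ) = 2 * ⌊omegaD D⌋ - (if D % 4 = 1 then 1 else 0)
  head : omegaD D = (⌊omegaD D⌋ : ℝ) + 1 / γ 1
  step : ∀ i, 1 ≤ i → γ i = u i + 1 / γ (i + 1)
  one_lt : ∀ i, 1 ≤ i → 1 < γ i
  floor_eq : ∀ i, 1 ≤ i → (u i : ℤ) = ⌊γ i⌋
  period : ∃ s, 1 ≤ s ∧ u s = u 0 ∧ ∀ i, 1 ≤ i → u (i + s) = u i

/-- The convergents `α_i = p_i + q_i ξ_D`, indexed by `i ≥ -1`. -/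
structure ConvData (D : ℕ) (u : ℕ → ℕ) (a : ℤ → OK) : Prop where
  neg_one : a (-1) = (1, 0)
  zero : a 0 = (⌊omegaD D⌋, 0) + (if D % 4 = 1 then ((-1 : ℤ), (1 : ℤ)) else (0, 1))
  recur : ∀ i : ℤ, -1 ≤ i → a (i + 2) = (u (i + 2).toNat : ℤ) • a (i + 1) + a i

/-- Semiconvergents `α_{i,r} = α_i + r·α_{i+1}`. -/
def semiconv (a : ℤ → OK) (i r : ℤ) : OK := a i + r • a (i + 1)

/-!
Write `α = (e + f) α_i + b α_{i+1}` with `b = r e + (r + 1) f`. The conjugates (second embedding)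
satisfy `α_{i+1}' = -α_i' / γ_{i+2}`, and for odd `i` also `α_i' > 0` and
`α_i' α_{i+1} - α_{i+1}' α_i = √Δ`; hence `N_i = Nm α_i < √Δ`, and the norm factors as
`Nm α = c (b √Δ + c N_i)` with `c = e + f - b / γ_{i+2} > 0`.
So `Nm α < c (c + b) √Δ`, and `u_{i+2} < γ_{i+2} < u_{i+2} + 1` bounds `c` by
`((u - r + 1) e + (u - r) f) / (u + 1)` and `c + b` by `(u + 1) ((u - r + 2) e + (u - r + 1) f)`.
-/

@[simp] lemma emb1_add (D : ℕ) (p q : OK) : emb1 D (p + q) = emb1 D p + emb1 D q := by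
  simp only [emb1, Prod.fst_add, Prod.snd_add, Int.cast_add]; ring

@[simp] lemma emb1_zsmul (D : ℕ) (n : ℤ) (p : OK) : emb1 D (n • p) = n * emb1 D p := by
  simp only [emb1, Prod.smul_fst, Prod.smul_snd, smul_eq_mul, Int.cast_mul]; ring

@[simp] lemma emb2_add (D : ℕ) (p q : OK) : emb2 D (p + q) = emb2 D p + emb2 D q := by
  simp only [emb2, Prod.fst_add, Prod.snd_add, Int.cast_add]; ring

@[simp] lemma emb2_zsmul (D : ℕ) (n : ℤ) (p : OK) : emb2 D (n • p) = n * emb2 D p := by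
  simp only [emb2, Prod.smul_fst, Prod.smul_snd, smul_eq_mul, Int.cast_mul]; ring

lemma omegaD_add_omegaD' (D : ℕ) : omegaD D + omegaD' D = if D % 4 = 1 then 1 else 0 := by
  unfold omegaD omegaD'; split <;> ring

lemma omegaD_sub_omegaD' (D : ℕ) : omegaD D - omegaD' D = Real.sqrt (disc D) := by
  unfold omegaD omegaD' disc
  split
  · ring
  · rw [Nat.cast_mul, Real.sqrt_mul (by norm_num), show ((4 : ℕ) : ℝ) = 2 ^ 2 by norm_num,
      Real.sqrt_sq (by norm_num)]
    ring

lemma one_lt_omegaD {D : ℕ} (hD : 2 ≤ D) : 1 < omegaD D := by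
  have h1 : 1 < Real.sqrt D := Real.lt_sqrt_of_sq_lt (by exact_mod_cast (by omega : 1 ^ 2 < D))
  unfold omegaD; split <;> linarith

lemma Nm_zsmul_add_zsmul {D : ℕ} {β β' : OK} {G S : ℝ} (hG : G ≠ 0)
    (hconj : emb2 D β' = -emb2 D β / G)
    (hdet : emb2 D β * emb1 D β' - emb2 D β' * emb1 D β = S) (p q : ℤ) :
    Nm D (p • β + q • β') = (p - q / G) * (q * S + (p - q / G) * Nm D β) := by
  simp only [Nm, emb1_add, emb1_zsmul, emb2_add, emb2_zsmul]
  rw [← hdet, hconj]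
  field_simp
  ring

@[elab_as_elim]
lemma Int.le_induction_odd {P : ℤ → Prop} (base : P (-1))
    (step : ∀ i, -1 ≤ i → P i → P (i + 2)) (i : ℤ) (hi : -1 ≤ i) (hodd : Odd i) :
    P i := by
  obtain ⟨m, rfl⟩ := hodd
  induction m, (by omega : -1 ≤ m) using Int.leInduction with
  | base => simpa using base
  | succ m hm ih => simpa [mul_add, add_right_comm] using step _ (by omega) (ih (by omega))

namespace CFData

variable {D : ℕ} {u : ℕ → ℕ} {γ : ℕ → ℝ} (hCF : CFData D u γ) {k : ℕ}
include hCF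

lemma one_le_u (hk : 1 ≤ k) : 1 ≤ u k := by
  have h := Int.le_floor.mpr (by exact_mod_cast (hCF.one_lt k hk).le : ((1 : ℤ) : ℝ) ≤ γ k)
  rw [← hCF.floor_eq k hk] at h
  exact_mod_cast h

lemma u_lt_gamma (hk : 1 ≤ k) : (u k : ℝ) < γ k := by
  have := hCF.one_lt (k + 1) (by omega)
  rw [hCF.step k hk]
  have : 0 < 1 / γ (k + 1) := by positivity
  linarith

lemma gamma_lt_u_add_one (hk : 1 ≤ k) : γ k < u k + 1 := by
  have := hCF.one_lt (k + 1) (by omega)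
  rw [hCF.step k hk, add_lt_add_iff_left, div_lt_one (by linarith)]
  exact this

end CFData

namespace ConvData

variable {D : ℕ} {u : ℕ → ℕ} {γ : ℕ → ℝ} {a : ℤ → OK} (hconv : ConvData D u a)
include hconv

lemma zero_eq : a 0 = (⌊omegaD D⌋ - if D % 4 = 1 then 1 else 0, 1) := by
  rw [hconv.zero]; split <;> simp [sub_eq_add_neg]

lemma emb1_add_two {i : ℤ} (hi : -1 ≤ i) :
    emb1 D (a (i + 2)) = u (i + 2).toNat * emb1 D (a (i + 1)) + emb1 D (a i) := by
  simp only [hconv.recur i hi, emb1_add, emb1_zsmul, Int.cast_natCast]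

lemma emb2_add_two {i : ℤ} (hi : -1 ≤ i) :
    emb2 D (a (i + 2)) = u (i + 2).toNat * emb2 D (a (i + 1)) + emb2 D (a i) := by
  simp only [hconv.recur i hi, emb2_add, emb2_zsmul, Int.cast_natCast]

lemma emb2_succ (hCF : CFData D u γ) {i : ℤ} (hi : -1 ≤ i) :
    emb2 D (a (i + 1)) = -emb2 D (a i) / γ (i + 2).toNat := by
  induction i, hi using Int.leInduction with
  | base =>
    have h0 : emb2 D (a 0) = ⌊omegaD D⌋ - omegaD D := by
      have := omegaD_add_omegaD' D
      rw [hconv.zero_eq, emb2]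
      split_ifs at this ⊢ <;> push_cast <;> linarith
    have h1 : emb2 D (a (-1)) = 1 := by simp [hconv.neg_one, emb2]
    rw [show (-1 : ℤ) + 1 = 0 by rfl, show ((-1 : ℤ) + 2).toNat = 1 by rfl, h0, h1, neg_div]
    linarith [hCF.head]
  | succ i hi ih =>
    set k := (i + 2).toNat
    have hk : 1 ≤ k := by omega
    have hγ := hCF.one_lt k hk
    have hγ' := hCF.one_lt (k + 1) (by omega)
    have hX : emb2 D (a i) = -γ k * emb2 D (a (i + 1)) := by
      rw [ih]; field_simp
    rw [show i + 1 + 1 = i + 2 by ring, show (i + 1 + 2).toNat = k + 1 by omega,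
      hconv.emb2_add_two hi, hX, hCF.step k hk]
    field_simp
    ring

lemma det_succ {i : ℤ} (hi : -1 ≤ i) :
    emb2 D (a (i + 1)) * emb1 D (a (i + 2)) - emb2 D (a (i + 2)) * emb1 D (a (i + 1)) =
      -(emb2 D (a i) * emb1 D (a (i + 1)) - emb2 D (a (i + 1)) * emb1 D (a i)) := by
  rw [hconv.emb1_add_two hi, hconv.emb2_add_two hi]
  ring

lemma det_neg_one :
    emb2 D (a (-1)) * emb1 D (a 0) - emb2 D (a 0) * emb1 D (a (-1)) = Real.sqrt (disc D) := by
  rw [hconv.neg_one, hconv.zero_eq, ← omegaD_sub_omegaD']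
  simp [emb1, emb2]

lemma emb1_pos_and_lt_succ (hCF : CFData D u γ) (hD : 2 ≤ D) {i : ℤ} (hi : -1 ≤ i) :
    0 < emb1 D (a i) ∧ emb1 D (a i) < emb1 D (a (i + 1)) := by
  induction i, hi using Int.leInduction with
  | base =>
    have hω := one_lt_omegaD hD
    have hfloor : (1 : ℝ) ≤ ⌊omegaD D⌋ := by
      exact_mod_cast Int.le_floor.mpr (by simpa using hω.le)
    rw [hconv.neg_one, show (-1 : ℤ) + 1 = 0 by rfl, hconv.zero_eq]
    simp only [emb1, Int.cast_one, Int.cast_zero, zero_mul, add_zero, zero_lt_one, true_and]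
    split <;> push_cast <;> linarith
  | succ i hi ih =>
    have hu : (1 : ℝ) ≤ u (i + 2).toNat := by exact_mod_cast hCF.one_le_u (by omega)
    rw [add_assoc, one_add_one_eq_two, hconv.emb1_add_two hi]
    constructor <;> nlinarith

lemma det_eq_and_emb2_pos_of_odd (hCF : CFData D u γ) {i : ℤ} (hi : -1 ≤ i) (hodd : Odd i) :
    emb2 D (a i) * emb1 D (a (i + 1)) - emb2 D (a (i + 1)) * emb1 D (a i) = Real.sqrt (disc D) ∧
      0 < emb2 D (a i) := by
  refine Int.le_induction_odd ?_ ?_ i hi hodd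
  · exact ⟨hconv.det_neg_one, by simp [hconv.neg_one, emb2]⟩
  rintro i hi ⟨hdet, hpos⟩
  have hγ := hCF.one_lt (i + 2).toNat (by omega)
  have hγ' := hCF.one_lt (i + 1 + 2).toNat (by omega)
  have hsucc := hconv.det_succ hi
  have hsucc' := hconv.det_succ (i := i + 1) (by omega)
  rw [show i + 1 + 1 = i + 2 by ring] at hsucc'
  refine ⟨?_, ?_⟩
  · rw [show i + 2 + 1 = i + 1 + 2 by ring]
    linarith
  · rw [show i + 2 = i + 1 + 1 by ring, hconv.emb2_succ hCF (by omega), hconv.emb2_succ hCF hi]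
    simp only [neg_div, neg_neg]
    exact div_pos (div_pos hpos (by linarith)) (by linarith)

lemma Nm_lt_sqrt_disc_of_odd (hCF : CFData D u γ) (hD : 2 ≤ D) {i : ℤ} (hi : -1 ≤ i)
    (hodd : Odd i) : Nm D (a i) < Real.sqrt (disc D) := by
  obtain ⟨hdet, hX⟩ := hconv.det_eq_and_emb2_pos_of_odd hCF hi hodd
  obtain ⟨hY, hYY⟩ := hconv.emb1_pos_and_lt_succ hCF hD hi
  have hγ := hCF.one_lt _ (by omega : 1 ≤ (i + 2).toNat)
  rw [hconv.emb2_succ hCF hi] at hdet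
  have hXY : 0 < emb2 D (a i) * emb1 D (a i) / γ (i + 2).toNat := by positivity
  rw [Nm, ← hdet, neg_div, neg_mul, sub_neg_eq_add, div_mul_eq_mul_div, mul_comm (emb1 D _)]
  linarith [mul_lt_mul_of_pos_left hYY hX]

end ConvData

lemma semiconv_coeff_pos {U G R E F : ℝ} (hUG : U < G) (hR : 0 ≤ R) (hRU : R + 1 ≤ U)
    (hE : 1 ≤ E) (hF : 0 ≤ F) : 0 < E + F - (R * E + (R + 1) * F) / G := by
  have hG : 0 < G := by linarith
  rw [sub_pos, div_lt_iff₀ hG]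
  nlinarith

lemma semiconv_coeff_bound {U G R E F : ℝ} (hUG : U < G) (hGU : G < U + 1) (hR : 0 ≤ R)
    (hRU : R + 1 ≤ U) (hE : 1 ≤ E) (hF : 0 ≤ F) :
    (E + F - (R * E + (R + 1) * F) / G) *
        (E + F - (R * E + (R + 1) * F) / G + (R * E + (R + 1) * F)) ≤
      ((U - R + 2) * E + (U - R + 1) * F) * ((U - R + 1) * E + (U - R) * F) := by
  set b := R * E + (R + 1) * F
  set c := E + F - b / G
  have hb : 0 ≤ b := add_nonneg (mul_nonneg hR (by linarith)) (mul_nonneg (by linarith) hF)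
  have hc : 0 < c := semiconv_coeff_pos hUG hR hRU hE hF
  have hU : 0 < U + 1 := by linarith
  have hc_le : c ≤ ((U - R + 1) * E + (U - R) * F) / (U + 1) := by
    have : b / (U + 1) ≤ b / G := div_le_div_of_nonneg_left hb (by linarith) hGU.le
    calc c ≤ E + F - b / (U + 1) := by linarith
      _ = _ := by field_simp; ring
  have hcb_le : c + b ≤ (U + 1) * ((U - R + 2) * E + (U - R + 1) * F) := by
    have : 0 ≤ b / G := div_nonneg hb (by linarith)
    have hE' : R + 1 ≤ (U + 1) * (U - R + 2) := by nlinarith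
    have hF' : R + 2 ≤ (U + 1) * (U - R + 1) := by nlinarith
    nlinarith [mul_le_mul_of_nonneg_right hE' (by linarith : 0 ≤ E),
      mul_le_mul_of_nonneg_right hF' hF]
  have hB : 0 ≤ ((U - R + 1) * E + (U - R) * F) / (U + 1) :=
    div_nonneg (add_nonneg (mul_nonneg (by linarith) (by linarith)) (mul_nonneg (by linarith) hF))
      hU.le
  calc c * (c + b) ≤ ((U - R + 1) * E + (U - R) * F) / (U + 1) *
        ((U + 1) * ((U - R + 2) * E + (U - R + 1) * F)) :=
        mul_le_mul hc_le hcb_le (by linarith) hB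
    _ = _ := by field_simp

theorem stmt9_general (D : ℕ) (hD : 2 ≤ D)
    (u : ℕ → ℕ) (γ : ℕ → ℝ) (hCF : CFData D u γ)
    (a : ℤ → OK) (hconv : ConvData D u a)
    (i : ℤ) (hi : -1 ≤ i) (hodd : Odd i)
    (r e f : ℤ) (hr0 : 0 ≤ r) (hr1 : r ≤ (u (i + 2).toNat : ℤ) - 1)
    (he : 1 ≤ e) (hf : 0 ≤ f)
    (α : OK) (hα : α = e • semiconv a i r + f • semiconv a i (r + 1)) :
    Nm D α < Real.sqrt (disc D) *
      (((u (i + 2).toNat : ℝ) - r + 2) * e + ((u (i + 2).toNat : ℝ) - r + 1) * f) *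
      (((u (i + 2).toNat : ℝ) - r + 1) * e + ((u (i + 2).toNat : ℝ) - r) * f) := by
  have hk : 1 ≤ (i + 2).toNat := by omega
  have hUG := hCF.u_lt_gamma hk
  have hGU := hCF.gamma_lt_u_add_one hk
  have hRU : (r : ℝ) + 1 ≤ u (i + 2).toNat := by
    exact_mod_cast (by omega : r + 1 ≤ (u (i + 2).toNat : ℤ))
  have hR : (0 : ℝ) ≤ r := by exact_mod_cast hr0
  have hE : (1 : ℝ) ≤ e := by exact_mod_cast he
  have hF : (0 : ℝ) ≤ f := by exact_mod_cast hf
  have hcomb : α = (e + f) • a i + (r * e + (r + 1) * f) • a (i + 1) := by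
    rw [hα, semiconv, semiconv]; module
  have hNS := hconv.Nm_lt_sqrt_disc_of_odd hCF hD hi hodd
  have hc := semiconv_coeff_pos hUG hR hRU hE hF
  have hcb := semiconv_coeff_bound hUG hGU hR hRU hE hF
  rw [hcomb, Nm_zsmul_add_zsmul (by linarith) (hconv.emb2_succ hCF hi)
    (hconv.det_eq_and_emb2_pos_of_odd hCF hi hodd).1]
  push_cast
  calc _ < Real.sqrt (disc D) * ((e + f - (r * e + (r + 1) * f) / γ (i + 2).toNat) *
        (e + f - (r * e + (r + 1) * f) / γ (i + 2).toNat + (r * e + (r + 1) * f))) := by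
        nlinarith [mul_pos (mul_pos hc hc) (sub_pos.mpr hNS)]
    _ ≤ _ := by rw [mul_assoc]; gcongr

/-- the norm bound for `α = e·α_{i,r} + f·α_{i,r+1}`. -/
theorem stmt9 (D : ℕ) (hD : 2 ≤ D) (hsq : Squarefree D)
    (u : ℕ → ℕ) (γ : ℕ → ℝ) (hCF : CFData D u γ)
    (a : ℤ → OK) (hconv : ConvData D u a)
    (i : ℤ) (hi : -1 ≤ i) (hodd : Odd i)
    (r e f : ℤ) (hr0 : 0 ≤ r) (hr1 : r ≤ (u (i + 2).toNat : ℤ) - 1)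
    (he : 1 ≤ e) (hf : 0 ≤ f)
    (α : OK) (hα : α = e • semiconv a i r + f • semiconv a i (r + 1)) :
    Nm D α < Real.sqrt (disc D) *
      (((u (i + 2).toNat : ℝ) - r + 2) * e + ((u (i + 2).toNat : ℝ) - r + 1) * f) *
      (((u (i + 2).toNat : ℝ) - r + 1) * e + ((u (i + 2).toNat : ℝ) - r) * f) :=
  stmt9_general D hD u γ hCF a hconv i hi hodd r e f hr0 hr1 he hf α hα
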